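/- Let ψ: [0,∞) → ℝ be twice differentiable on (0,∞) with lim_{s→0⁺} ψ(s) = 0 and lim_{s→0⁺} ψ'(s) = 0, and define ω(x) = ψ(|x|) for x ≠ 0 in ℝⁿ, ω(0) = 0, where ψ is C² on (0,∞). Then ω ∈ C²(ℝⁿ) if and only if lim_{s→0⁺} ψ''(s) exists and is finite. -/

import Mathlib

/-!
Away from the origin `ω = ψ ∘ ‖·‖` has gradient `g(‖x‖) • x` with `g(s) = ψ'(s) / s`, and the
derivative of the gradient is `g(r) • id + r g'(r) • (x̂ ⊗ x̂)` with `r g'(r) = ψ''(r) - g(r)`.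
By l'Hôpital, `ψ(s) / s → 0`, and `g(s) → L` once `ψ'' → L`; so `ω` is differentiable at `0`
with zero derivative, the gradient is differentiable at `0` with derivative `L • id`, and the
Hessian is continuous there. Conversely, `ψ(t) = ω(t • e)` for a unit vector `e` and `t > 0`,
so `ψ''` is the restriction to `(0, ∞)` of a continuous function.
-/

open Filter Topology Metric Set

noncomputable def pd {n : ℕ} (i : Fin n) (f : EuclideanSpace ℝ (Fin n) → ℝ)
    (x : EuclideanSpace ℝ (Fin n)) : ℝ :=
  fderiv ℝ f x (EuclideanSpace.single i 1)

noncomputable def spd {n : ℕ} (i j : Fin n) (f : EuclideanSpace ℝ (Fin n) → ℝ)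
    (x : EuclideanSpace ℝ (Fin n)) : ℝ :=
  pd i (pd j f) x

noncomputable def lap {n : ℕ} (f : EuclideanSpace ℝ (Fin n) → ℝ)
    (x : EuclideanSpace ℝ (Fin n)) : ℝ :=
  ∑ i, spd i i f x

def TwiceDiffAt {n : ℕ} (f : EuclideanSpace ℝ (Fin n) → ℝ)
    (p : EuclideanSpace ℝ (Fin n)) : Prop :=
  (∀ᶠ x in 𝓝 p, DifferentiableAt ℝ f x) ∧
  DifferentiableAt ℝ (fderiv ℝ f) p ∧
  Tendsto (fun x => (f x - f p - fderiv ℝ f p (x - p)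
      - (1/2) * fderiv ℝ (fderiv ℝ f) p (x - p) (x - p)) / ‖x - p‖^2)
    (𝓝[≠] p) (𝓝 0)

theorem tendsto_div_nhdsGT_zero_of_hasDerivAt {f f' : ℝ → ℝ} {L : ℝ}
    (hf : ∀ s > 0, HasDerivAt f (f' s) s) (hf0 : Tendsto f (𝓝[>] 0) (𝓝 0))
    (hf' : Tendsto f' (𝓝[>] 0) (𝓝 L)) : Tendsto (fun s => f s / s) (𝓝[>] 0) (𝓝 L) :=
  HasDerivAt.lhopital_zero_nhdsGT (eventually_nhdsWithin_of_forall hf)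
    (.of_forall hasDerivAt_id) (.of_forall fun _ => one_ne_zero)
    hf0 (tendsto_id.mono_left nhdsWithin_le_nhds) (by simpa using hf')

theorem tendsto_deriv_deriv_nhdsGT_of_eqOn {ψ φ : ℝ → ℝ} (hφ : ContDiff ℝ 2 φ)
    (hψφ : EqOn ψ φ (Ioi 0)) :
    Tendsto (deriv (deriv ψ)) (𝓝[>] 0) (𝓝 (deriv (deriv φ) 0)) := by
  have hcont : Continuous (deriv (deriv φ)) := (hφ.deriv' (n := 1)).continuous_deriv le_rfl
  exact (hcont.continuousAt.mono_left nhdsWithin_le_nhds).congr'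
    (eventuallyEq_nhdsWithin_of_eqOn ((hψφ.deriv isOpen_Ioi).deriv isOpen_Ioi)).symm

theorem exists_tendsto_deriv_deriv_of_contDiff {E : Type*} [NormedAddCommGroup E]
    [NormedSpace ℝ E] [Nontrivial E] {ψ : ℝ → ℝ} {F : E → ℝ} (hF : ∀ x ≠ 0, F x = ψ ‖x‖)
    (hF2 : ContDiff ℝ 2 F) : ∃ L, Tendsto (deriv (deriv ψ)) (𝓝[>] 0) (𝓝 L) := by
  obtain ⟨e, he⟩ := exists_norm_eq E zero_le_one
  refine ⟨_, tendsto_deriv_deriv_nhdsGT_of_eqOn (φ := fun t => F (t • e))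
    (hF2.comp (contDiff_id.smul contDiff_const)) fun t (ht : 0 < t) => ?_⟩
  have hte : t • e ≠ 0 := smul_ne_zero ht.ne' (norm_ne_zero_iff.1 (by simp [he]))
  simp [hF _ hte, norm_smul, he, abs_of_pos ht]

theorem hasFDerivAt_zero_of_norm_le {E G : Type*} [NormedAddCommGroup E] [NormedSpace ℝ E]
    [NormedAddCommGroup G] [NormedSpace ℝ G] {f : E → G} {f' : E →L[ℝ] G} {u : ℝ → ℝ}
    (hu : Tendsto u (𝓝[>] 0) (𝓝 0)) (hf : ∀ y ≠ 0, ‖f y - f 0 - f' y‖ ≤ u ‖y‖ * ‖y‖) :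
    HasFDerivAt f f' 0 := by
  rw [hasFDerivAt_iff_isLittleO_nhds_zero, Asymptotics.isLittleO_iff]
  intro c hc
  have hsmall : ∀ᶠ y in 𝓝[≠] (0 : E), u ‖y‖ < c :=
    (hu.comp tendsto_norm_nhdsNE_zero).eventually (eventually_lt_nhds hc)
  filter_upwards [eventually_nhdsWithin_iff.1 hsmall] with y hy
  rcases eq_or_ne y 0 with rfl | hy0
  · simp
  · simpa using (hf y hy0).trans (mul_le_mul_of_nonneg_right (hy hy0).le (norm_nonneg y))

section InnerProductSpace

variable {E : Type*} [NormedAddCommGroup E] [InnerProductSpace ℝ E]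

theorem hasFDerivAt_norm_of_ne_zero {x : E} (hx : x ≠ 0) :
    HasFDerivAt (‖·‖) (‖x‖⁻¹ • innerSL ℝ x) x := by
  have h := (hasStrictFDerivAt_norm_sq x).hasFDerivAt.sqrt (by positivity)
  simp only [Real.sqrt_sq (norm_nonneg _)] at h
  convert h using 1
  module

theorem norm_smulRight_innerSL (c : ℝ) (x : E) :
    ‖(c • ‖x‖⁻¹ • innerSL ℝ x).smulRight x‖ = |c| * ‖x‖ := by
  rw [ContinuousLinearMap.norm_smulRight_apply, norm_smul, norm_smul, innerSL_apply_norm,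
    Real.norm_eq_abs, norm_inv, norm_norm]
  rcases eq_or_ne x 0 with rfl | hx
  · simp
  · field_simp

theorem contDiff_one_comp_norm_smul {a a' : ℝ → ℝ} {L : ℝ}
    (ha : ∀ s > 0, HasDerivAt a (a' s) s) (ha' : ContinuousOn a' (Ioi 0))
    (haL : Tendsto a (𝓝[>] 0) (𝓝 L)) (ha'0 : Tendsto (fun s => s * a' s) (𝓝[>] 0) (𝓝 0)) :
    ContDiff ℝ 1 (fun x : E => a ‖x‖ • x) := by
  classical
  -- `T x` is the radial part `r a'(r) • (x̂ ⊗ x̂)` of the derivative, where `r = ‖x‖`.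
  let T : E → E →L[ℝ] E := fun x => (a' ‖x‖ • ‖x‖⁻¹ • innerSL ℝ x).smulRight x
  let H : E → E →L[ℝ] E := fun x =>
    if x = 0 then L • .id ℝ E else a ‖x‖ • .id ℝ E + T x
  have hT : Tendsto T (𝓝[≠] 0) (𝓝 0) := by
    have hTle : ∀ y, ‖T y‖ ≤ |‖y‖ * a' ‖y‖| := fun y => by
      rw [norm_smulRight_innerSL, abs_mul, abs_norm, mul_comm]
    refine squeeze_zero_norm hTle ?_
    simpa using (ha'0.comp (tendsto_norm_nhdsNE_zero (E := E))).abs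
  refine contDiff_one_iff_hasFDerivAt.2 ⟨H, continuous_iff_continuousAt.2 fun x => ?_, fun x => ?_⟩
  · rcases eq_or_ne x 0 with rfl | hx
    · rw [← continuousWithinAt_compl_self, ContinuousWithinAt]
      have hlim := ((haL.comp tendsto_norm_nhdsNE_zero).smul_const (.id ℝ E)).add hT
      rw [add_zero] at hlim
      simp only [H, if_pos]
      exact hlim.congr' (eventually_nhdsWithin_of_forall fun y hy => (if_neg hy).symm)
    · have hr : 0 < ‖x‖ := norm_pos_iff.2 hx
      have hac : ContinuousAt a ‖x‖ := (ha _ hr).continuousAt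
      have ha'c : ContinuousAt a' ‖x‖ := ha'.continuousAt (Ioi_mem_nhds hr)
      have hcont : ContinuousAt (fun y => a ‖y‖ • .id ℝ E +
          ContinuousLinearMap.smulRightL ℝ E E (a' ‖y‖ • ‖y‖⁻¹ • innerSL ℝ y) y) x := by
        fun_prop (disch := exact norm_ne_zero_iff.2 hx)
      exact hcont.congr ((eventually_ne_nhds hx).mono fun y hy => (if_neg hy).symm)
  · rcases eq_or_ne x 0 with rfl | hx
    · refine hasFDerivAt_zero_of_norm_le (u := fun s => |a s - L|) ?_ fun y _ => ?_
      · simpa using (haL.sub_const L).abs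
      · simp [H, ← sub_smul, norm_smul]
    · have hr : 0 < ‖x‖ := norm_pos_iff.2 hx
      rw [show H x = a ‖x‖ • .id ℝ E + T x from if_neg hx]
      exact ((ha _ hr).comp_hasFDerivAt x (hasFDerivAt_norm_of_ne_zero hx)).smul (hasFDerivAt_id x)

theorem hasFDerivAt_of_eq_comp_norm {ψ ψ' : ℝ → ℝ} {F : E → ℝ} (hF0 : F 0 = 0)
    (hF : ∀ x ≠ 0, F x = ψ ‖x‖) (hψ : ∀ s > 0, HasDerivAt ψ (ψ' s) s)
    (hψ0 : Tendsto ψ (𝓝[>] 0) (𝓝 0)) (hψ'0 : Tendsto ψ' (𝓝[>] 0) (𝓝 0)) (x : E) :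
    HasFDerivAt F (innerSL ℝ ((ψ' ‖x‖ / ‖x‖) • x)) x := by
  rcases eq_or_ne x 0 with rfl | hx
  · refine hasFDerivAt_zero_of_norm_le (u := fun s => |ψ s / s|)
      (by simpa using (tendsto_div_nhdsGT_zero_of_hasDerivAt hψ hψ0 hψ'0).abs) fun y hy => ?_
    rw [hF y hy, hF0, abs_div, abs_of_pos (norm_pos_iff.2 hy),
      div_mul_cancel₀ _ (norm_ne_zero_iff.2 hy)]
    simp
  · have h := (hψ _ (norm_pos_iff.2 hx)).comp_hasFDerivAt x (hasFDerivAt_norm_of_ne_zero hx)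
    rw [smul_smul, ← div_eq_mul_inv] at h
    refine (h.congr_of_eventuallyEq ((eventually_ne_nhds hx).mono hF)).congr_fderiv ?_
    simp

theorem contDiff_one_deriv_div_norm_smul {ψ : ℝ → ℝ} {L : ℝ} (hψ : ContDiffOn ℝ 2 ψ (Ioi 0))
    (hψ'0 : Tendsto (deriv ψ) (𝓝[>] 0) (𝓝 0))
    (hψ''L : Tendsto (deriv (deriv ψ)) (𝓝[>] 0) (𝓝 L)) :
    ContDiff ℝ 1 (fun x : E => (deriv ψ ‖x‖ / ‖x‖) • x) := by
  have hψ1 : ContDiffOn ℝ 1 (deriv ψ) (Ioi 0) := hψ.deriv_of_isOpen isOpen_Ioi le_rfl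
  have hψ'' : ∀ s > 0, HasDerivAt (deriv ψ) (deriv (deriv ψ) s) s := fun s hs =>
    ((hψ1.differentiableOn one_ne_zero).differentiableAt (Ioi_mem_nhds hs)).hasDerivAt
  have hψ''c : ContinuousOn (deriv (deriv ψ)) (Ioi 0) :=
    hψ1.continuousOn_deriv_of_isOpen isOpen_Ioi le_rfl
  have hg : Tendsto (fun s => deriv ψ s / s) (𝓝[>] 0) (𝓝 L) :=
    tendsto_div_nhdsGT_zero_of_hasDerivAt hψ'' hψ'0 hψ''L
  have hg' : ∀ s > 0, HasDerivAt (fun s => deriv ψ s / s)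
      ((deriv (deriv ψ) s - deriv ψ s / s) / s) s := fun s hs =>
    ((hψ'' s hs).div (hasDerivAt_id s) hs.ne').congr_deriv (by simp only [id]; field_simp)
  have hg'c : ContinuousOn (fun s => (deriv (deriv ψ) s - deriv ψ s / s) / s) (Ioi 0) :=
    (hψ''c.sub (hψ1.continuousOn.div continuousOn_id fun s hs => hs.ne')).div continuousOn_id
      fun s hs => hs.ne'
  have hsg' : Tendsto (fun s => s * ((deriv (deriv ψ) s - deriv ψ s / s) / s))
      (𝓝[>] 0) (𝓝 0) := by
    have hψ''g : Tendsto (fun s => deriv (deriv ψ) s - deriv ψ s / s) (𝓝[>] 0) (𝓝 0) := by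
      simpa using hψ''L.sub hg
    refine hψ''g.congr' ?_
    filter_upwards [self_mem_nhdsWithin] with s (hs : 0 < s)
    field_simp
  exact contDiff_one_comp_norm_smul hg' hg'c hg hsg'

theorem contDiff_two_of_tendsto_deriv_deriv {ψ : ℝ → ℝ} {F : E → ℝ} {L : ℝ} (hF0 : F 0 = 0)
    (hF : ∀ x ≠ 0, F x = ψ ‖x‖) (hψ : ContDiffOn ℝ 2 ψ (Ioi 0))
    (hψ0 : Tendsto ψ (𝓝[>] 0) (𝓝 0)) (hψ'0 : Tendsto (deriv ψ) (𝓝[>] 0) (𝓝 0))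
    (hψ''L : Tendsto (deriv (deriv ψ)) (𝓝[>] 0) (𝓝 L)) : ContDiff ℝ 2 F := by
  have hψ' : ∀ s > 0, HasDerivAt ψ (deriv ψ s) s := fun s hs =>
    ((hψ.differentiableOn two_ne_zero).differentiableAt (Ioi_mem_nhds hs)).hasDerivAt
  refine contDiff_succ_iff_hasFDerivAt.2 ⟨_, ?_, hasFDerivAt_of_eq_comp_norm hF0 hF hψ' hψ0 hψ'0⟩
  exact (innerSL ℝ : E →L[ℝ] E →L[ℝ] ℝ).contDiff.comp
    (contDiff_one_deriv_div_norm_smul hψ hψ'0 hψ''L)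

end InnerProductSpace

open scoped Classical in
theorem stmt7 (n : ℕ) (hn : 1 ≤ n) (ψ : ℝ → ℝ)
    (hψC2 : ContDiffOn ℝ 2 ψ (Set.Ioi 0))
    (hψ0 : Tendsto ψ (𝓝[>] 0) (𝓝 0))
    (hψ'0 : Tendsto (deriv ψ) (𝓝[>] 0) (𝓝 0)) :
    ContDiff ℝ 2 (fun x : EuclideanSpace ℝ (Fin n) => if x = 0 then 0 else ψ ‖x‖) ↔
      ∃ L : ℝ, Tendsto (deriv (deriv ψ)) (𝓝[>] 0) (𝓝 L) := by
  have : Nonempty (Fin n) := ⟨⟨0, hn⟩⟩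
  refine ⟨exists_tendsto_deriv_deriv_of_contDiff fun x hx => if_neg hx, fun ⟨L, hL⟩ => ?_⟩
  exact contDiff_two_of_tendsto_deriv_deriv (if_pos rfl) (fun x hx => if_neg hx) hψC2 hψ0 hψ'0 hL
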